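/- arXiv:quant-ph/0609234 — 12 statements merged into one kernel-verified Lean document; each statement's English description precedes it below -/
import Mathlib

section
/- Let X be a finite set, E ⊆ X × X a set of directed edges, and W a unitary matrix in M_{X×X}(ℂ) whose entries satisfy: W_{z,x} ≠ 0 if and only if (x,z) ∈ E. Then for every pair of distinct vertices x, y ∈ X and every vertex z with (x,z) ∈ E and (y,z) ∈ E, there exists a vertex z' ≠ z such that (x,z') ∈ E and (y,z') ∈ E (quadrangularity). -/
/-- Quadrangularity: a necessary condition for the existence of a scalar quantum
walk on the directed graph `G(X, E)`, i.e. a unitary `W` whose entry `W z x`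
(the amplitude for moving from `x` to `z`) is nonzero exactly when `(x, z) ∈ E`. -/
theorem quadrangularity_of_scalar_quantum_walk
    {X : Type*} [Fintype X] [DecidableEq X]
    (E : Set (X × X)) (W : Matrix X X ℂ)
    (hW : W ∈ Matrix.unitaryGroup X ℂ)
    (hE : ∀ x z : X, W z x ≠ 0 ↔ (x, z) ∈ E) :
    ∀ x y : X, x ≠ y → ∀ z : X, (x, z) ∈ E → (y, z) ∈ E →
      ∃ z' : X, z' ≠ z ∧ (x, z') ∈ E ∧ (y, z') ∈ E := by
  intro x y hxy z hxz hyz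
  by_contra hcon
  push_neg at hcon
  have h1 : (star W * W) x y = 0 := by
    rw [hW.1, Matrix.one_apply_ne hxy]
  rw [Matrix.mul_apply] at h1
  have hsum : ∑ w, (star W) x w * W w y = (star W) x z * W z y := by
    apply Finset.sum_eq_single
    · intro w _ hw
      rcases (em ((x, w) ∈ E)) with h | h
      · have := hcon w hw h
        have : W w y = 0 := by
          by_contra h'
          exact this ((hE y w).mp h')
        simp [this]
      · have : W w x = 0 := by
          by_contra h'
          exact h ((hE x w).mp h')
        simp [Matrix.star_apply, this]
    · intro h; exact absurd (Finset.mem_univ z) h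
  rw [hsum] at h1
  have hx : W z x ≠ 0 := (hE x z).mpr hxz
  have hy : W z y ≠ 0 := (hE y z).mpr hyz
  rw [Matrix.star_apply] at h1
  rcases mul_eq_zero.mp h1 with h | h
  · exact hx (star_eq_zero.mp h)
  · exact hy h
end

section
/- Let Γ be a finite group, Δ ⊆ Γ a subset, and c : Γ → ℂ with c(δ) ≠ 0 for every δ ∈ Δ. If the matrix W = Σ_{δ∈Δ} c(δ) • P_δ is unitary, then for every pair (δ₁, δ₂) of distinct elements of Δ there exists a pair (δ₃, δ₄) ∈ Δ × Δ with (δ₃, δ₄) ≠ (δ₁, δ₂) and δ₁δ₂⁻¹ = δ₃δ₄⁻¹. -/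
/-- The permutation matrix of right multiplication by `g`:
`(P_g)_{v,w} = 1` if `v = w * g` and `0` otherwise. -/
def rightMulMatrix {Γ : Type*} [Group Γ] [DecidableEq Γ] (g : Γ) : Matrix Γ Γ ℂ :=
  fun v w => if v = w * g then 1 else 0

/-- The entry formula for a homogeneous scalar quantum walk. -/
lemma walk_apply {Γ : Type*} [Group Γ] [Fintype Γ] [DecidableEq Γ]
    (Δ : Finset Γ) (c : Γ → ℂ) (v u : Γ) :
    (∑ δ ∈ Δ, c δ • rightMulMatrix δ) v u
      = if u⁻¹ * v ∈ Δ then c (u⁻¹ * v) else 0 := by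
  rw [Matrix.sum_apply]
  have : ∀ δ ∈ Δ, (c δ • rightMulMatrix δ) v u = if δ = u⁻¹ * v then c δ else 0 := by
    intro δ _
    simp only [Matrix.smul_apply, rightMulMatrix, smul_eq_mul, mul_ite, mul_one, mul_zero]
    congr 1
    simp [eq_comm, eq_inv_mul_iff_mul_eq]
  rw [Finset.sum_congr rfl this, Finset.sum_ite_eq' Δ (u⁻¹ * v) c]

/-- Quadrangularity on Cayley graphs: if a homogeneous scalar quantum walk
`W = Σ_{δ ∈ Δ} c(δ) • P_δ` with all `c(δ) ≠ 0` is unitary, then every pair of distinct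
generators `(δ₁, δ₂)` admits a different pair `(δ₃, δ₄)` with `δ₁ δ₂⁻¹ = δ₃ δ₄⁻¹`. -/
theorem quadrangularity_cayley
    {Γ : Type*} [Group Γ] [Fintype Γ] [DecidableEq Γ]
    (Δ : Finset Γ) (c : Γ → ℂ) (hc : ∀ δ ∈ Δ, c δ ≠ 0)
    (hW : (∑ δ ∈ Δ, c δ • rightMulMatrix δ) ∈ Matrix.unitaryGroup Γ ℂ) :
    ∀ δ₁ ∈ Δ, ∀ δ₂ ∈ Δ, δ₁ ≠ δ₂ →
      ∃ δ₃ ∈ Δ, ∃ δ₄ ∈ Δ, (δ₃, δ₄) ≠ (δ₁, δ₂) ∧ δ₁ * δ₂⁻¹ = δ₃ * δ₄⁻¹ := by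
  intro δ₁ h1 δ₂ h2 hne
  by_contra H
  push_neg at H
  set W := ∑ δ ∈ Δ, c δ • rightMulMatrix δ with hWdef
  set g := δ₁ * δ₂⁻¹ with hg
  have hg1 : g ≠ 1 := by
    simp [hg, mul_inv_eq_one]; exact hne
  have hstar : star W * W = 1 := hW.1
  have hent : (star W * W) g 1 = 0 := by
    rw [hstar, Matrix.one_apply_ne hg1]
  rw [Matrix.mul_apply] at hent
  have hterm : ∀ u : Γ, (star W) g u * W u 1
      = (starRingEnd ℂ) (if g⁻¹ * u ∈ Δ then c (g⁻¹ * u) else 0)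
        * (if u ∈ Δ then c u else 0) := by
    intro u
    rw [Matrix.star_eq_conjTranspose, Matrix.conjTranspose_apply, hWdef,
      walk_apply, walk_apply]
    simp
  rw [Finset.sum_congr rfl (fun u _ => hterm u)] at hent
  have hsingle : ∀ u ∈ Finset.univ, u ≠ δ₁ →
      (starRingEnd ℂ) (if g⁻¹ * u ∈ Δ then c (g⁻¹ * u) else 0)
        * (if u ∈ Δ then c u else 0) = 0 := by
    intro u _ hu
    by_contra hne0
    have huΔ : u ∈ Δ := by
      by_contra h; simp [h] at hne0
    have hguΔ : g⁻¹ * u ∈ Δ := by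
      by_contra h; simp [h] at hne0
    have := H u huΔ (g⁻¹ * u) hguΔ
    rcases eq_or_ne (u, g⁻¹ * u) (δ₁, δ₂) with heq | hneq
    · exact hu (by simpa using congrArg Prod.fst heq)
    · exact (this hneq) (by group)
  rw [Finset.sum_eq_single_of_mem δ₁ (Finset.mem_univ δ₁) hsingle] at hent
  have hgd : g⁻¹ * δ₁ = δ₂ := by rw [hg]; group
  rw [hgd] at hent
  simp only [h1, h2, if_pos] at hent
  rcases mul_eq_zero.mp hent with h | h
  · exact hc δ₂ h2 (by simpa using h)
  · exact hc δ₁ h1 h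
end

section
/- Let Γ be a finite group and x, y ∈ Γ with x ≠ y and x·y⁻¹ = y·x⁻¹. Then for every real number φ, the matrix W = (cos φ) • P_x + (i sin φ) • P_y is unitary. -/
lemma rightMulMatrix_mul {Γ : Type*} [Group Γ] [Fintype Γ] [DecidableEq Γ] (g h : Γ) :
    rightMulMatrix g * rightMulMatrix h = rightMulMatrix (h * g) := by
  ext v w
  rw [Matrix.mul_apply, Finset.sum_eq_single (w * h)]
  · simp [rightMulMatrix, mul_assoc]
  · intro u _ hu
    simp [rightMulMatrix, hu]
  · simp

lemma rightMulMatrix_star {Γ : Type*} [Group Γ] [DecidableEq Γ] (g : Γ) :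
    star (rightMulMatrix g) = rightMulMatrix g⁻¹ := by
  ext v w
  rw [Matrix.star_apply]
  unfold rightMulMatrix
  by_cases h : w = v * g
  · have h' : v = w * g⁻¹ := by rw [h]; group
    rw [if_pos h, if_pos h', star_one]
  · have h' : v ≠ w * g⁻¹ := fun hv => h (by rw [hv]; group)
    rw [if_neg h, if_neg h', star_zero]

lemma rightMulMatrix_one {Γ : Type*} [Group Γ] [DecidableEq Γ] :
    rightMulMatrix (1 : Γ) = 1 := by
  ext v w
  simp [rightMulMatrix, Matrix.one_apply, eq_comm]

/-- If `x ≠ y` satisfy `x y⁻¹ = y x⁻¹`, then for every `φ`, the matrix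
`W = (cos φ) • P_x + (i sin φ) • P_y` is unitary. -/
theorem two_generator_walk_unitary
    {Γ : Type*} [Group Γ] [Fintype Γ] [DecidableEq Γ]
    (x y : Γ) (hxy : x ≠ y) (hrel : x * y⁻¹ = y * x⁻¹) (φ : ℝ) :
    ((Real.cos φ : ℂ) • rightMulMatrix x +
      (Complex.I * Real.sin φ) • rightMulMatrix y) ∈ Matrix.unitaryGroup Γ ℂ := by
  rw [Matrix.mem_unitaryGroup_iff]
  have hrel' : x⁻¹ * y = y⁻¹ * x := by
    rw [inv_mul_eq_iff_eq_mul, ← mul_assoc, hrel]; group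
  have hc : star (Real.cos φ : ℂ) = (Real.cos φ : ℂ) := by
    rw [Complex.star_def, Complex.conj_ofReal]
  have hs : star (Complex.I * (Real.sin φ : ℂ)) = -(Complex.I * Real.sin φ) := by
    rw [star_mul, Complex.star_def, Complex.conj_ofReal, Complex.conj_I]; ring
  have hsc : (Real.sin φ : ℂ) ^ 2 + (Real.cos φ : ℂ) ^ 2 = 1 := by
    exact_mod_cast congrArg (Complex.ofReal) (Real.sin_sq_add_cos_sq φ)
  rw [star_add, star_smul, star_smul, hc, hs, rightMulMatrix_star, rightMulMatrix_star,
    add_mul, Matrix.smul_mul, Matrix.smul_mul, mul_add, mul_add,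
    Matrix.mul_smul, Matrix.mul_smul, Matrix.mul_smul, Matrix.mul_smul,
    rightMulMatrix_mul, rightMulMatrix_mul, rightMulMatrix_mul, rightMulMatrix_mul,
    inv_mul_cancel, inv_mul_cancel, rightMulMatrix_one, hrel']
  simp only [Complex.ofReal_cos, Complex.ofReal_sin] at hsc
  match_scalars
  · linear_combination hsc - Complex.sin (φ : ℂ) ^ 2 * Complex.I_sq
  · ring
end

section
/- Let a, b ∈ ℂ satisfy |a|² + |b|² = 1 and conj(a)·b + conj(b)·a = 0. Then there exist real numbers θ and φ such that a = e^{iθ} cos φ and b = i e^{iθ} sin φ. -/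
/-!
The hypotheses say exactly that `a + b` and `a - b` are unit vectors: the cross term of
`‖a ± b‖²` is `±(conj a * b + conj b * a) = 0`. Writing `a + b = e^{iα}` and `a - b = e^{iβ}`,
the half-sum and half-difference are `e^{iθ} cos φ` and `i e^{iθ} sin φ` with
`θ = (α + β) / 2` and `φ = (α - β) / 2`.
-/

open Complex ComplexConjugate

namespace Complex

theorem two_mul_exp_mul_I_mul_cos (θ φ : ℂ) :
    2 * (exp (θ * I) * cos φ) = exp ((θ + φ) * I) + exp ((θ - φ) * I) := by
  rw [show (θ + φ) * I = θ * I + φ * I by ring, show (θ - φ) * I = θ * I + -φ * I by ring,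
    exp_add, exp_add]
  linear_combination exp (θ * I) * two_cos φ

theorem two_mul_I_mul_exp_mul_I_mul_sin (θ φ : ℂ) :
    2 * (I * exp (θ * I) * sin φ) = exp ((θ + φ) * I) - exp ((θ - φ) * I) := by
  rw [show (θ + φ) * I = θ * I + φ * I by ring, show (θ - φ) * I = θ * I + -φ * I by ring,
    exp_add, exp_add]
  linear_combination I * exp (θ * I) * two_sin φ +
    exp (θ * I) * (exp (-φ * I) - exp (φ * I)) * I_sq

theorem exists_half_add_half_sub_eq_exp_mul_cos_sin {u v : ℂ} (hu : ‖u‖ = 1) (hv : ‖v‖ = 1) :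
    ∃ θ φ : ℝ, (u + v) / 2 = exp (θ * I) * Real.cos φ ∧
      (u - v) / 2 = I * exp (θ * I) * Real.sin φ := by
  obtain ⟨α, rfl⟩ := (norm_eq_one_iff u).1 hu
  obtain ⟨β, rfl⟩ := (norm_eq_one_iff v).1 hv
  refine ⟨(α + β) / 2, (α - β) / 2, ?_, ?_⟩
  · rw [eq_comm, ← mul_right_inj' two_ne_zero, ofReal_cos, two_mul_exp_mul_I_mul_cos]
    push_cast
    ring_nf
  · rw [eq_comm, ← mul_right_inj' two_ne_zero, ofReal_sin, two_mul_I_mul_exp_mul_I_mul_sin]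
    push_cast
    ring_nf

theorem norm_add_sq_and_norm_sub_sq_of_conj_mul_add_conj_mul_eq_zero {a b : ℂ}
    (h : conj a * b + conj b * a = 0) :
    ‖a + b‖ ^ 2 = ‖a‖ ^ 2 + ‖b‖ ^ 2 ∧ ‖a - b‖ ^ 2 = ‖a‖ ^ 2 + ‖b‖ ^ 2 := by
  have h_re : (a * conj b).re = 0 := by
    have h' := congrArg re h
    simp only [add_re, mul_re, conj_re, conj_im, zero_re] at h' ⊢
    linarith
  simp only [← normSq_eq_norm_sq, normSq_add, normSq_sub, h_re]
  constructor <;> ring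

end Complex

/-- Every solution of the two-generator unitarity conditions
`|a|² + |b|² = 1` and `conj(a)·b + conj(b)·a = 0` has the form
`a = e^{iθ} cos φ`, `b = i e^{iθ} sin φ` for some reals `θ, φ`. -/
theorem two_coefficient_solution (a b : ℂ)
    (hnorm : ‖a‖ ^ 2 + ‖b‖ ^ 2 = 1)
    (horth : (starRingEnd ℂ) a * b + (starRingEnd ℂ) b * a = 0) :
    ∃ θ φ : ℝ, a = Complex.exp (θ * Complex.I) * Real.cos φ ∧
      b = Complex.I * Complex.exp (θ * Complex.I) * Real.sin φ := by
  obtain ⟨h_add, h_sub⟩ := norm_add_sq_and_norm_sub_sq_of_conj_mul_add_conj_mul_eq_zero horth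
  have norm_eq_one {z : ℂ} (hz : ‖z‖ ^ 2 = 1) : ‖z‖ = 1 :=
    (pow_eq_one_iff_of_nonneg (norm_nonneg z) two_ne_zero).1 hz
  obtain ⟨θ, φ, ha, hb⟩ := exists_half_add_half_sub_eq_exp_mul_cos_sin
    (norm_eq_one (h_add.trans hnorm)) (norm_eq_one (h_sub.trans hnorm))
  refine ⟨θ, φ, ?_, ?_⟩
  · rw [← ha]; ring
  · rw [← hb]; ring
end

section
/- Let Γ = (ℤ/2ℤ) × (ℤ/2ℤ) (the Klein four-group, whose Cayley graph with the two standard generators x = (1,0) and y = (0,1) is the 2-dimensional hypercube). Then for every real number φ, the matrix W = (cos φ) • P_x + (i sin φ) • P_y is unitary; hence the hypercube of dimension 2 admits a homogeneous scalar quantum walk. -/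
/-- The permutation matrix of right translation by `g` in an additive group:
`(P_g)_{v,w} = 1` if `v = w + g` and `0` otherwise. -/
def rightAddMatrix {Γ : Type*} [AddGroup Γ] [DecidableEq Γ] (g : Γ) : Matrix Γ Γ ℂ :=
  fun v w => if v = w + g then 1 else 0

lemma rightAddMatrix_mul {Γ : Type*} [AddGroup Γ] [DecidableEq Γ] [Fintype Γ] (g h : Γ) :
    rightAddMatrix g * rightAddMatrix h = rightAddMatrix (h + g) := by
  ext v w
  simp only [Matrix.mul_apply, rightAddMatrix, ite_mul, one_mul, zero_mul, mul_ite, mul_one,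
    mul_zero]
  rw [Finset.sum_ite_eq' Finset.univ (w + h) (fun u => if v = u + g then (1:ℂ) else 0)]
  simp [add_assoc]

lemma rightAddMatrix_star {Γ : Type*} [AddGroup Γ] [DecidableEq Γ] (g : Γ) :
    star (rightAddMatrix g : Matrix Γ Γ ℂ) = rightAddMatrix (-g) := by
  ext v w
  simp only [Matrix.star_apply, rightAddMatrix]
  have h : (v = w + -g) ↔ (w = v + g) := by
    constructor <;> intro h <;> simp [h, add_assoc]
  simp [h, apply_ite (star : ℂ → ℂ)]

lemma rightAddMatrix_zero {Γ : Type*} [AddGroup Γ] [DecidableEq Γ] :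
    rightAddMatrix (0 : Γ) = (1 : Matrix Γ Γ ℂ) := by
  ext v w
  simp [rightAddMatrix, Matrix.one_apply, eq_comm]

/-- On the Klein four-group `(ℤ/2ℤ) × (ℤ/2ℤ)` with standard generators
`x = (1,0)` and `y = (0,1)` (whose Cayley graph is the 2-dimensional hypercube),
the matrix `W = (cos φ) • P_x + (i sin φ) • P_y` is unitary for every real `φ`:
the hypercube of dimension 2 admits a homogeneous scalar quantum walk. -/
theorem hypercube_dim2_walk (φ : ℝ) :
    ((Real.cos φ : ℂ) • rightAddMatrix ((1, 0) : ZMod 2 × ZMod 2) +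
      (Complex.I * Real.sin φ) • rightAddMatrix ((0, 1) : ZMod 2 × ZMod 2)) ∈
      Matrix.unitaryGroup (ZMod 2 × ZMod 2) ℂ := by
  rw [Matrix.mem_unitaryGroup_iff]
  have h1 : -((1,0) : ZMod 2 × ZMod 2) = (1,0) := by decide
  have h2 : -((0,1) : ZMod 2 × ZMod 2) = (0,1) := by decide
  have h3 : ((1,0) : ZMod 2 × ZMod 2) + (1,0) = 0 := by decide
  have h4 : ((0,1) : ZMod 2 × ZMod 2) + (0,1) = 0 := by decide
  have h5 : ((1,0) : ZMod 2 × ZMod 2) + (0,1) = (1,1) := by decide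
  have h6 : ((0,1) : ZMod 2 × ZMod 2) + (1,0) = (1,1) := by decide
  simp only [star_add, star_smul, rightAddMatrix_star, h1, h2, add_mul, mul_add,
    Matrix.smul_mul, Matrix.mul_smul, rightAddMatrix_mul, h3, h4, h5, h6, smul_smul,
    rightAddMatrix_zero, Complex.star_def, map_mul, Complex.conj_I, Complex.conj_ofReal]
  have hx' : ((Real.sin φ : ℂ))^2 + ((Real.cos φ : ℂ))^2 = 1 := by
    norm_cast
    exact Real.sin_sq_add_cos_sq φ
  match_scalars
  · linear_combination Complex.sin_sq_add_cos_sq (φ:ℂ) - (Complex.sin (φ:ℂ))^2 * Complex.I_mul_I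
  · ring
end

section
/- Let a, b, c ∈ ℂ satisfy conj(a)·b + conj(c)·a + conj(b)·c = 0 and |a|² + |b|² + |c|² = 1. Then there exist real numbers θ, φ₁, φ₂ such that a = e^{iθ}(1 + e^{iφ₁} + e^{iφ₂})/3, b = e^{iθ}(1 + e^{2πi/3}e^{iφ₁} + e^{-2πi/3}e^{iφ₂})/3, and c = e^{iθ}(1 + e^{-2πi/3}e^{iφ₁} + e^{2πi/3}e^{iφ₂})/3. -/
/-! Write `ω = e^{2πi/3}` and take the discrete Fourier transform of `(a, b, c)` over `ℤ/3`:
`u = a + b + c`, `v = a + ω² b + ω c`, `w = a + ω b + ω² c`. For a cube root of unity `ζ`,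
`|a + ζ² b + ζ c|² = |a|² + |b|² + |c|² + ζ² S + ζ S̄` with `S = conj(a)b + conj(c)a + conj(b)c`,
so the two hypotheses say exactly that `u, v, w` are unimodular.
Putting `u = e^{iθ}`, `v/u = e^{iφ₁}`, `w/u = e^{iφ₂}`, the inverse transform gives the formulas. -/

open Complex ComplexConjugate Real

lemma conj_eq_sq_of_pow_three_eq_one {ζ : ℂ} (h : ζ ^ 3 = 1) : conj ζ = ζ ^ 2 := by
  have hnorm : ‖ζ‖ = 1 :=
    (pow_eq_one_iff_of_nonneg (norm_nonneg ζ) three_ne_zero).mp (by rw [← norm_pow, h, norm_one])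
  have hunit : ζ * conj ζ = 1 := by rw [mul_conj', hnorm]; norm_num
  linear_combination (-conj ζ) * h + ζ ^ 2 * hunit

lemma norm_add_sq_mul_add_mul_eq_one {a b c ζ : ℂ} (hζ : ζ ^ 3 = 1)
    (horth : conj a * b + conj c * a + conj b * c = 0) (hnorm : ‖a‖ ^ 2 + ‖b‖ ^ 2 + ‖c‖ ^ 2 = 1) :
    ‖a + ζ ^ 2 * b + ζ * c‖ = 1 := by
  refine (pow_eq_one_iff_of_nonneg (norm_nonneg _) two_ne_zero).mp ?_
  have hnorm' : conj a * a + conj b * b + conj c * c = 1 := by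
    simp only [conj_mul']; exact_mod_cast hnorm
  have horth' : a * conj b + c * conj a + b * conj c = 0 := by
    simpa using congrArg conj horth
  suffices (‖a + ζ ^ 2 * b + ζ * c‖ ^ 2 : ℂ) = 1 by exact_mod_cast this
  rw [← conj_mul']
  simp only [map_add, map_mul, map_pow, conj_eq_sq_of_pow_three_eq_one hζ]
  linear_combination hnorm' + ζ ^ 2 * horth + ζ * horth'
    + ((ζ ^ 3 + 1) * conj b * b + conj c * c + ζ * conj b * a + ζ ^ 2 * conj b * c
      + ζ * conj c * b) * hζ

lemma isPrimitiveRoot_exp_two_pi_mul_I_div_three : IsPrimitiveRoot (exp (2 * π * I / 3)) 3 := by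
  simpa using isPrimitiveRoot_exp 3 (by norm_num)

lemma exp_neg_two_pi_mul_I_div_three : exp (-(2 * π * I) / 3) = exp (2 * π * I / 3) ^ 2 := by
  have h := isPrimitiveRoot_exp_two_pi_mul_I_div_three.pow_eq_one
  rw [neg_div, Complex.exp_neg, inv_eq_of_mul_eq_one_right]
  linear_combination h

/-- Every solution of the unitarity conditions `conj(a)b + conj(c)a + conj(b)c = 0`
and `|a|² + |b|² + |c|² = 1` is, up to a global phase `e^{iθ}`, of the form
`a = e^{iθ}(1 + e^{iφ₁} + e^{iφ₂})/3`,
`b = e^{iθ}(1 + e^{2πi/3} e^{iφ₁} + e^{-2πi/3} e^{iφ₂})/3`,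
`c = e^{iθ}(1 + e^{-2πi/3} e^{iφ₁} + e^{2πi/3} e^{iφ₂})/3`. -/
theorem three_generator_coefficients_classification (a b c : ℂ)
    (horth : (starRingEnd ℂ) a * b + (starRingEnd ℂ) c * a + (starRingEnd ℂ) b * c = 0)
    (hnorm : ‖a‖ ^ 2 + ‖b‖ ^ 2 + ‖c‖ ^ 2 = 1) :
    ∃ θ φ₁ φ₂ : ℝ,
      a = Complex.exp (θ * Complex.I) *
        ((1 + Complex.exp (φ₁ * Complex.I) + Complex.exp (φ₂ * Complex.I)) / 3) ∧
      b = Complex.exp (θ * Complex.I) *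
        ((1 + Complex.exp (2 * Real.pi * Complex.I / 3) * Complex.exp (φ₁ * Complex.I)
          + Complex.exp (-(2 * Real.pi * Complex.I) / 3) * Complex.exp (φ₂ * Complex.I)) / 3) ∧
      c = Complex.exp (θ * Complex.I) *
        ((1 + Complex.exp (-(2 * Real.pi * Complex.I) / 3) * Complex.exp (φ₁ * Complex.I)
          + Complex.exp (2 * Real.pi * Complex.I / 3) * Complex.exp (φ₂ * Complex.I)) / 3) := by
  rw [exp_neg_two_pi_mul_I_div_three]
  set ω := exp (2 * π * I / 3)
  have hω := isPrimitiveRoot_exp_two_pi_mul_I_div_three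
  have hω3 : ω ^ 3 = 1 := hω.pow_eq_one
  have hsum : 1 + ω + ω ^ 2 = 0 := by
    simpa [Finset.sum_range_succ, add_assoc] using hω.geom_sum_eq_zero (by norm_num)
  have hu : ‖a + b + c‖ = 1 := by
    simpa using norm_add_sq_mul_add_mul_eq_one (one_pow 3) horth hnorm
  have hv := norm_add_sq_mul_add_mul_eq_one hω3 horth hnorm
  have hw : ‖a + ω * b + ω ^ 2 * c‖ = 1 := by
    have := norm_add_sq_mul_add_mul_eq_one (ζ := ω ^ 2)
      (by rw [pow_right_comm, hω3, one_pow]) horth hnorm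
    rwa [← pow_mul, show ω ^ (2 * 2) = ω by linear_combination ω * hω3] at this
  have hu0 : a + b + c ≠ 0 := norm_ne_zero_iff.mp (by rw [hu]; exact one_ne_zero)
  obtain ⟨θ, hθ⟩ := (norm_eq_one_iff _).mp hu
  obtain ⟨φ₁, hφ₁⟩ := (norm_eq_one_iff ((a + ω ^ 2 * b + ω * c) / (a + b + c))).mp
    (by rw [norm_div, hv, hu, div_one])
  obtain ⟨φ₂, hφ₂⟩ := (norm_eq_one_iff ((a + ω * b + ω ^ 2 * c) / (a + b + c))).mp
    (by rw [norm_div, hw, hu, div_one])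
  have hv' : exp (θ * I) * exp (φ₁ * I) = a + ω ^ 2 * b + ω * c := by
    rw [hθ, hφ₁, mul_div_cancel₀ _ hu0]
  have hw' : exp (θ * I) * exp (φ₂ * I) = a + ω * b + ω ^ 2 * c := by
    rw [hθ, hφ₂, mul_div_cancel₀ _ hu0]
  refine ⟨θ, φ₁, φ₂, ?_, ?_, ?_⟩
  · linear_combination -(b + c) / 3 * hsum - (hθ + hv' + hw') / 3
  · linear_combination -(a + c) / 3 * hsum - (2 * b + ω * c) / 3 * hω3
      - (hθ + ω * hv' + ω ^ 2 * hw') / 3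
  · linear_combination -(a + b) / 3 * hsum - (ω * b + 2 * c) / 3 * hω3
      - (hθ + ω ^ 2 * hv' + ω * hw') / 3
end

section
/- Let Γ = (ℤ/2ℤ)³ with the three standard generators e₁ = (1,0,0), e₂ = (0,1,0), e₃ = (0,0,1), whose Cayley graph is the 3-dimensional hypercube. If a, b, c ∈ ℂ are such that the matrix W = a • P_{e₁} + b • P_{e₂} + c • P_{e₃} is unitary, then at least one of a, b, c is zero. Hence there is no homogeneous scalar quantum walk on the hypercube of dimension 3. -/
lemma zmod2_sum (f : ZMod 2 → ℂ) : ∑ x, f x = f 0 + f 1 := Fin.sum_univ_two f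


/-- On `(ℤ/2ℤ)³` with the three standard generators (whose Cayley graph is the
3-dimensional hypercube), if `W = a • P_{e₁} + b • P_{e₂} + c • P_{e₃}` is unitary,
then one of `a, b, c` vanishes: there is no homogeneous scalar quantum walk on the
hypercube of dimension 3. -/
theorem hypercube_dim3_no_walk (a b c : ℂ)
    (hW : (a • rightAddMatrix ((1, 0, 0) : ZMod 2 × ZMod 2 × ZMod 2)
        + b • rightAddMatrix ((0, 1, 0) : ZMod 2 × ZMod 2 × ZMod 2)
        + c • rightAddMatrix ((0, 0, 1) : ZMod 2 × ZMod 2 × ZMod 2)) ∈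
      Matrix.unitaryGroup (ZMod 2 × ZMod 2 × ZMod 2) ℂ) :
    a = 0 ∨ b = 0 ∨ c = 0 := by
  rw [Matrix.mem_unitaryGroup_iff] at hW
  have h12 := congrFun (congrFun hW ((0,0,0) : ZMod 2 × ZMod 2 × ZMod 2)) ((1,1,0))
  have h13 := congrFun (congrFun hW ((0,0,0) : ZMod 2 × ZMod 2 × ZMod 2)) ((1,0,1))
  have h23 := congrFun (congrFun hW ((0,0,0) : ZMod 2 × ZMod 2 × ZMod 2)) ((0,1,1))
  simp [Matrix.mul_apply, rightAddMatrix, Matrix.one_apply, Fintype.sum_prod_type,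
    zmod2_sum, Matrix.star_apply, Prod.ext_iff,
    (by decide : (1 : ZMod 2) + 1 = 0), (by decide : (0 : ZMod 2) ≠ 1),
    (by decide : (1 : ZMod 2) ≠ 0)] at h12 h13 h23
  -- now h12 : b * conj a + a * conj b = 0, etc.
  by_contra h
  push_neg at h
  obtain ⟨ha, hb, hc⟩ := h
  set x := a * (starRingEnd ℂ) b with hxdef
  set y := b * (starRingEnd ℂ) c with hydef
  set z := c * (starRingEnd ℂ) a with hzdef
  have hxre : x.re = 0 := by
    have : x + (starRingEnd ℂ) x = 0 := by
      rw [hxdef]; simp only [map_mul, RingHom.id_apply, Complex.conj_conj]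
      linear_combination h12
    have h2 := congrArg Complex.re this
    simp [Complex.add_re, Complex.conj_re] at h2
    linarith
  have hyre : y.re = 0 := by
    have : y + (starRingEnd ℂ) y = 0 := by
      rw [hydef]; simp only [map_mul, RingHom.id_apply, Complex.conj_conj]
      linear_combination h23
    have h2 := congrArg Complex.re this
    simp [Complex.add_re, Complex.conj_re] at h2
    linarith
  have hzre : z.re = 0 := by
    have : z + (starRingEnd ℂ) z = 0 := by
      rw [hzdef]; simp only [map_mul, RingHom.id_apply, Complex.conj_conj]
      linear_combination h13
    have h2 := congrArg Complex.re this
    simp [Complex.add_re, Complex.conj_re] at h2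
    linarith
  have hprod : x * y * z = (Complex.normSq a : ℂ) * (Complex.normSq b : ℂ) * (Complex.normSq c : ℂ) := by
    rw [hxdef, hydef, hzdef, ← Complex.mul_conj, ← Complex.mul_conj, ← Complex.mul_conj]
    ring
  have hre : (x * y * z).re = 0 := by
    simp [Complex.mul_re, Complex.mul_im, hxre, hyre, hzre]
  rw [hprod] at hre
  simp [Complex.mul_re, Complex.normSq_eq_zero] at hre
  tauto
end

section
/- For every real number φ and every sign ε ∈ {+1, −1}, the complex numbers a = cos φ, b = ((1 + iε)/2) sin φ, c = −((1 − iε)/2) sin φ satisfy conj(a)·b + conj(c)·a = 0, conj(b)·c + conj(c)·b = 0, and |a|² + |b|² + |c|² = 1. -/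
/-!
Write `b = u sin φ` and `c = -ū sin φ` with `u = (1 + iε)/2`. The first condition then holds for
every `u`, the second says `Re (u²) = 0` and the third `|u|² = 1/2`; for `u = (1 + iε)/2` these
read `1 - ε² = 0` and `1 + ε² = 2`, i.e. `ε² = 1`.
-/

open Complex ComplexConjugate

section Coefficients

variable (x s : ℝ) (u : ℂ)

theorem conj_mul_add_conj_mul_eq_zero_of_real :
    conj (x : ℂ) * (u * s) + conj (-conj u * s) * x = 0 := by
  simp only [map_mul, map_neg, conj_conj, conj_ofReal]
  ring

theorem conj_mul_add_conj_mul_eq_zero_of_re_sq_eq_zero (hu : (u ^ 2).re = 0) :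
    conj (u * s) * (-conj u * s) + conj (-conj u * s) * (u * s) = 0 := by
  have hsum : conj u ^ 2 + u ^ 2 = 0 := by
    rw [← map_pow, add_comm, add_conj, hu, mul_zero, ofReal_zero]
  simp only [map_mul, map_neg, conj_conj, conj_ofReal]
  linear_combination -(s : ℂ) ^ 2 * hsum

theorem norm_sq_add_norm_sq_add_norm_sq_eq_one (hu : normSq u = 1 / 2) (hxs : x ^ 2 + s ^ 2 = 1) :
    ‖(x : ℂ)‖ ^ 2 + ‖u * s‖ ^ 2 + ‖-conj u * s‖ ^ 2 = 1 := by
  simp only [Complex.sq_norm, normSq_mul, normSq_neg, normSq_conj, normSq_ofReal, hu]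
  linear_combination hxs

end Coefficients

section HalfOnePlusIMul

variable (ε : ℝ)

theorem conj_one_add_I_mul_div_two : conj ((1 + I * ε) / 2) = (1 - I * ε) / 2 := by
  simp only [map_div₀, map_add, map_mul, map_one, conj_I, conj_ofReal, map_ofNat]
  ring

theorem re_sq_one_add_I_mul_div_two : (((1 + I * ε) / 2) ^ 2).re = (1 - ε ^ 2) / 4 := by
  have hsq : ((1 + I * ε) / 2) ^ 2 = ((1 - ε ^ 2) / 4 : ℝ) + (ε / 2 : ℝ) * I := by
    push_cast
    linear_combination (ε : ℂ) ^ 2 / 4 * I_sq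
  rw [hsq, add_re, ofReal_re, re_ofReal_mul, I_re, mul_zero, add_zero]

theorem normSq_one_add_I_mul_div_two : normSq ((1 + I * ε) / 2) = (1 + ε ^ 2) / 4 := by
  rw [normSq_div, mul_comm, ← ofReal_one, normSq_add_mul_I, normSq_ofNat]
  ring

end HalfOnePlusIMul

/-- For every real `φ` and sign `ε ∈ {+1, −1}`, the coefficients `a = cos φ`,
`b = ((1 + iε)/2) sin φ`, `c = −((1 − iε)/2) sin φ` satisfy the unitarity conditions
`conj(a)b + conj(c)a = 0`, `conj(b)c + conj(c)b = 0` and `|a|² + |b|² + |c|² = 1`. -/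
theorem case_two_coefficients_unitarity (φ ε : ℝ) (hε : ε = 1 ∨ ε = -1) (a b c : ℂ)
    (ha : a = Real.cos φ)
    (hb : b = (1 + Complex.I * ε) / 2 * Real.sin φ)
    (hc : c = -((1 - Complex.I * ε) / 2) * Real.sin φ) :
    (starRingEnd ℂ) a * b + (starRingEnd ℂ) c * a = 0 ∧
    (starRingEnd ℂ) b * c + (starRingEnd ℂ) c * b = 0 ∧
    ‖a‖ ^ 2 + ‖b‖ ^ 2 + ‖c‖ ^ 2 = 1 := by
  have hε2 : ε ^ 2 = 1 := by rcases hε with rfl | rfl <;> norm_num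
  rw [← conj_one_add_I_mul_div_two] at hc
  subst ha hb hc
  refine ⟨conj_mul_add_conj_mul_eq_zero_of_real _ _ _,
    conj_mul_add_conj_mul_eq_zero_of_re_sq_eq_zero _ _ ?_,
    norm_sq_add_norm_sq_add_norm_sq_eq_one _ _ _ ?_ (Real.cos_sq_add_sin_sq φ)⟩
  · rw [re_sq_one_add_I_mul_div_two, hε2]; norm_num
  · rw [normSq_one_add_I_mul_div_two, hε2]; norm_num
end

section
/- Let a, b, c ∈ ℂ with a ≠ 0 satisfy conj(a)·b + conj(c)·a = 0, conj(b)·c + conj(c)·b = 0, and |a|² + |b|² + |c|² = 1. Then there exist real numbers θ, φ and a sign ε ∈ {+1, −1} such that a = e^{iθ} cos φ, b = e^{iθ}((1 + iε)/2) sin φ, and c = −e^{iθ}((1 − iε)/2) sin φ. -/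
/-!
Strip the global phase: multiplying `(a, b, c)` by `conj u`, `u = e^{i arg a}`, preserves the
conditions and makes `a = r` real and nonzero. The first condition then reads `r (b + conj c) = 0`,
so `b = -conj c`, and the second becomes `Re (c²) = 0`, i.e. `c = t (1 - iε)` with `t` real and
`ε = ±1`. The norm condition is now `r² + (2t)² = 1`, so `r = cos φ`, `-2t = sin φ`.
-/

open Complex ComplexConjugate

structure UnitarityConditions (a b c : ℂ) : Prop where
  conj_mul_add : conj a * b + conj c * a = 0
  conj_mul_add_conj_mul : conj b * c + conj c * b = 0
  norm_sq_add : ‖a‖ ^ 2 + ‖b‖ ^ 2 + ‖c‖ ^ 2 = 1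

theorem Complex.conj_mul_eq_of_norm_eq_one {u : ℂ} (hu : ‖u‖ = 1) : conj u * u = 1 := by
  rw [conj_mul', hu]; norm_num

theorem Complex.eq_mul_of_conj_mul_eq {u z w : ℂ} (hu : ‖u‖ = 1) (h : conj u * z = w) :
    z = u * w := by
  linear_combination (-z) * conj_mul_eq_of_norm_eq_one hu + u * h

theorem Real.exists_cos_eq_sin_eq_of_sq_add_sq_eq_one {x y : ℝ} (h : x ^ 2 + y ^ 2 = 1) :
    ∃ φ : ℝ, Real.cos φ = x ∧ Real.sin φ = y := by
  obtain ⟨φ, hφ⟩ := (norm_eq_one_iff (x + y * I)).mp <| by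
    rw [norm_def, normSq_add_mul_I, h, Real.sqrt_one]
  refine ⟨φ, ?_, ?_⟩
  · simpa [exp_ofReal_mul_I_re] using congrArg re hφ
  · simpa [exp_ofReal_mul_I_im] using congrArg im hφ

theorem Complex.exists_eq_mul_one_sub_I_mul_of_re_sq_eq_zero {w : ℂ} (hw : (w ^ 2).re = 0) :
    ∃ t ε : ℝ, (ε = 1 ∨ ε = -1) ∧ w = t * (1 - I * ε) := by
  have hsq : (w.im + w.re) * (w.im - w.re) = 0 := by
    rw [sq, mul_re] at hw
    linear_combination -hw
  obtain ⟨ε, hε, him⟩ : ∃ ε : ℝ, (ε = 1 ∨ ε = -1) ∧ w.im = -ε * w.re := by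
    rcases mul_eq_zero.mp hsq with h | h
    · exact ⟨1, Or.inl rfl, by linarith⟩
    · exact ⟨-1, Or.inr rfl, by linarith⟩
  refine ⟨w.re, ε, hε, ?_⟩
  conv_lhs => rw [← re_add_im w, him]
  push_cast
  ring

theorem Complex.norm_one_sub_I_mul_sq {ε : ℝ} (hε : ε = 1 ∨ ε = -1) :
    ‖1 - I * ε‖ ^ 2 = 2 := by
  rcases hε with rfl | rfl <;> norm_num [Complex.sq_norm, normSq_apply]

namespace UnitarityConditions

variable {a b c : ℂ}

theorem conj_mul (h : UnitarityConditions a b c) {u : ℂ} (hu : ‖u‖ = 1) :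
    UnitarityConditions (conj u * a) (conj u * b) (conj u * c) := by
  have hu' : u * conj u = 1 := by rw [mul_comm]; exact conj_mul_eq_of_norm_eq_one hu
  refine ⟨?_, ?_, ?_⟩
  · simp only [map_mul, conj_conj]
    linear_combination (conj a * b + conj c * a) * hu' + h.conj_mul_add
  · simp only [map_mul, conj_conj]
    linear_combination (conj b * c + conj c * b) * hu' + h.conj_mul_add_conj_mul
  · simpa only [norm_mul, norm_conj, hu, one_mul] using h.norm_sq_add

theorem eq_neg_conj_of_ofReal {r : ℝ} (hr : r ≠ 0) (h : UnitarityConditions r b c) :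
    b = -conj c := by
  have key : (r : ℂ) * (b + conj c) = 0 := by
    simpa only [conj_ofReal, mul_comm _ (r : ℂ), mul_add] using h.conj_mul_add
  linear_combination (mul_eq_zero.mp key).resolve_left (ofReal_ne_zero.mpr hr)

theorem exists_of_ofReal {r : ℝ} (hr : r ≠ 0) (h : UnitarityConditions r b c) :
    ∃ φ ε : ℝ, (ε = 1 ∨ ε = -1) ∧ r = Real.cos φ ∧
      b = (1 + I * ε) / 2 * Real.sin φ ∧ c = -((1 - I * ε) / 2 * Real.sin φ) := by
  have hb := h.eq_neg_conj_of_ofReal hr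
  have hc : (c ^ 2).re = 0 := by
    have h2 := h.conj_mul_add_conj_mul
    rw [hb, map_neg, conj_conj] at h2
    have : ((2 * (c ^ 2).re : ℝ) : ℂ) = 0 := by
      rw [← add_conj, map_pow]
      linear_combination -h2
    simpa using this
  obtain ⟨t, ε, hε, rfl⟩ := exists_eq_mul_one_sub_I_mul_of_re_sq_eq_zero hc
  have hnorm : r ^ 2 + (-2 * t) ^ 2 = 1 := by
    have h3 := h.norm_sq_add
    rw [hb, norm_neg, norm_conj, norm_mul, mul_pow, norm_one_sub_I_mul_sq hε, norm_real,
      Real.norm_eq_abs, sq_abs, norm_real, Real.norm_eq_abs, sq_abs] at h3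
    linear_combination h3
  obtain ⟨φ, hcos, hsin⟩ := Real.exists_cos_eq_sin_eq_of_sq_add_sq_eq_one hnorm
  refine ⟨φ, ε, hε, hcos.symm, ?_, ?_⟩
  · rw [hb, hsin]
    simp only [map_mul, map_sub, conj_ofReal, map_one, conj_I]
    push_cast
    ring
  · rw [hsin]
    push_cast
    ring

end UnitarityConditions

open UnitarityConditions in
/-- Every solution with `a ≠ 0` of the unitarity conditions `conj(a)b + conj(c)a = 0`,
`conj(b)c + conj(c)b = 0`, `|a|² + |b|² + |c|² = 1` is, up to a global phase `e^{iθ}`,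
of the form `a = e^{iθ} cos φ`, `b = e^{iθ}((1 + iε)/2) sin φ`,
`c = −e^{iθ}((1 − iε)/2) sin φ` with `ε ∈ {+1, −1}`. -/
theorem case_two_coefficients_classification (a b c : ℂ) (ha : a ≠ 0)
    (h1 : (starRingEnd ℂ) a * b + (starRingEnd ℂ) c * a = 0)
    (h2 : (starRingEnd ℂ) b * c + (starRingEnd ℂ) c * b = 0)
    (hnorm : ‖a‖ ^ 2 + ‖b‖ ^ 2 + ‖c‖ ^ 2 = 1) :
    ∃ θ φ ε : ℝ, (ε = 1 ∨ ε = -1) ∧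
      a = Complex.exp (θ * Complex.I) * Real.cos φ ∧
      b = Complex.exp (θ * Complex.I) * ((1 + Complex.I * ε) / 2) * Real.sin φ ∧
      c = -(Complex.exp (θ * Complex.I) * ((1 - Complex.I * ε) / 2) * Real.sin φ) := by
  set u := exp (arg a * I) with hu_def
  have hu : ‖u‖ = 1 := norm_exp_ofReal_mul_I _
  have hua : conj u * a = ‖a‖ := by
    conv_lhs => rw [← norm_mul_exp_arg_mul_I a, ← hu_def, mul_left_comm,
      conj_mul_eq_of_norm_eq_one hu, mul_one]
  have h := (UnitarityConditions.mk h1 h2 hnorm).conj_mul hu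
  rw [hua] at h
  obtain ⟨φ, ε, hε, hr, hb, hc⟩ := h.exists_of_ofReal (norm_ne_zero_iff.mpr ha)
  refine ⟨arg a, φ, ε, hε, ?_, ?_, ?_⟩
  · exact eq_mul_of_conj_mul_eq hu (hua.trans (congrArg _ hr))
  · rw [eq_mul_of_conj_mul_eq hu hb]; ring
  · rw [eq_mul_of_conj_mul_eq hu hc]; ring
end

section
/- Let n ≥ 1 and d ≥ 1 with d dividing n, let l be an integer, and let θ₀, …, θ_{d−1} be real numbers. In Γ = ℤ/nℤ consider the generating set Δ = { j·(n/d) + l : j = 0, …, d−1 } and the coefficients w_j = (1/d) Σ_{k=0}^{d−1} e^{iθ_k} e^{2πi k j / d}. Then the matrix W = Σ_{j=0}^{d−1} w_j • P_{j·(n/d)+l} is unitary; hence this family of Cayley graphs of cyclic groups admits homogeneous scalar quantum walks with d−1 free real parameters. -/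
open Complex Finset

lemma star_stdAddChar {d : ℕ} [NeZero d] (x : ZMod d) :
    star (ZMod.stdAddChar x) = ZMod.stdAddChar (-x) := by
  rw [ZMod.stdAddChar_apply, ZMod.stdAddChar_apply, AddChar.map_neg_eq_inv,
    Circle.coe_inv_eq_conj]
  rfl

lemma sum_stdAddChar_mul {d : ℕ} [NeZero d] (m : ZMod d) :
    ∑ j : ZMod d, ZMod.stdAddChar (m * j) = if m = 0 then (d : ℂ) else 0 := by
  classical
  have h : ∑ j : ZMod d, ZMod.stdAddChar (m * j)
      = ∑ j : ZMod d, (ZMod.stdAddChar (N := d)).mulShift m j := by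
    simp [AddChar.mulShift_apply]
  by_cases hm : m = 0
  · simp [hm, AddChar.map_zero_eq_one, ZMod.card]
  · rw [if_neg hm, h]
    rw [AddChar.sum_eq_zero_iff_ne_zero]
    rw [← AddChar.one_eq_zero]
    exact ZMod.isPrimitive_stdAddChar d hm

lemma cast_mod_mul {n d : ℕ} [NeZero n] (hdvd : d ∣ n) (x : ℕ) :
    ((x % d * (n / d) : ℕ) : ZMod n) = ((x * (n / d) : ℕ) : ZMod n) := by
  have hc : d * (n / d) = n := Nat.mul_div_cancel' hdvd
  calc ((x % d * (n / d) : ℕ) : ZMod n)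
      = ((x % d * (n / d) : ℕ) : ZMod n) + ((x / d : ℕ) : ZMod n) * ((d * (n / d) : ℕ) : ZMod n) := by
        rw [hc, ZMod.natCast_self, mul_zero, add_zero]
    _ = (((x % d + d * (x / d)) * (n / d) : ℕ) : ZMod n) := by push_cast; ring
    _ = ((x * (n / d) : ℕ) : ZMod n) := by rw [Nat.mod_add_div]

lemma fadd {n d : ℕ} [NeZero n] [NeZero d] (hdvd : d ∣ n) (s m : ZMod d) :
    (((s + m).val * (n / d) : ℕ) : ZMod n)
      = ((s.val * (n / d) : ℕ) : ZMod n) + ((m.val * (n / d) : ℕ) : ZMod n) := by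
  rw [ZMod.val_add, cast_mod_mul hdvd]
  push_cast
  ring

/-- For `d ∣ n`, the Cayley graph of `ℤ/nℤ` with generating set
`{ j(n/d) + l : j = 0, …, d−1 }` admits a homogeneous scalar quantum walk: the matrix
`W = Σ_j w_j • P_{j(n/d)+l}` with `w_j = (1/d) Σ_k e^{iθ_k} e^{2πik j/d}` is unitary
for any reals `θ₀, …, θ_{d−1}` (giving `d−1` free real parameters). -/
theorem cyclic_group_cayley_walk (n d : ℕ) [NeZero n] [NeZero d]
    (hn : 1 ≤ n) (hd : 1 ≤ d) (hdvd : d ∣ n) (l : ℤ)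
    (θ : ZMod d → ℝ) (w : ZMod d → ℂ)
    (hw : ∀ j : ZMod d, w j = (1 / (d : ℂ)) * ∑ k : ZMod d,
      Complex.exp ((θ k) * Complex.I) *
        Complex.exp (2 * Real.pi * Complex.I * (k.val : ℂ) * (j.val : ℂ) / (d : ℂ))) :
    (∑ j : ZMod d,
      w j • rightAddMatrix (((j.val * (n / d) : ℕ) : ZMod n) + (l : ZMod n))) ∈
      Matrix.unitaryGroup (ZMod n) ℂ := by
  classical
  set ψ : AddChar (ZMod d) ℂ := ZMod.stdAddChar (N := d) with hψdef
  set a : ZMod d → ℂ := fun k => Complex.exp ((θ k) * Complex.I) with ha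
  have hdne : (d : ℂ) ≠ 0 := Nat.cast_ne_zero.mpr (NeZero.ne d)
  -- rewrite w in character form
  have hw' : ∀ j : ZMod d, w j = (1 / (d : ℂ)) * ∑ k : ZMod d, a k * ψ (k * j) := by
    intro j
    rw [hw j]
    congr 1
    refine Finset.sum_congr rfl fun k _ => ?_
    have h2 : ψ (k * j) = Complex.exp (2 * Real.pi * Complex.I * (k.val : ℂ) * (j.val : ℂ) / (d : ℂ)) := by
      have h1 : (k * j : ZMod d) = (((k.val * j.val : ℕ) : ℤ) : ZMod d) := by
        push_cast [ZMod.natCast_zmod_val]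
        ring
      rw [hψdef, h1, ZMod.stdAddChar_coe]
      congr 1
      push_cast
      ring
    rw [h2]
  -- unit modulus of the a's
  have hunit : ∀ k : ZMod d, a k * star (a k) = 1 := by
    intro k
    have hsa : star (a k) = Complex.exp (-((θ k : ℂ) * Complex.I)) := by
      rw [ha]
      show (starRingEnd ℂ) (Complex.exp _) = _
      rw [← Complex.exp_conj]
      congr 1
      simp [map_mul, Complex.conj_ofReal, Complex.conj_I]
    rw [hsa, ha]
    simp [← Complex.exp_add]
  -- the autocorrelation identity
  have key : ∀ s : ZMod d, (∑ m : ZMod d, w (m + s) * star (w m))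
      = if s = 0 then 1 else 0 := by
    intro s
    have term : ∀ m : ZMod d, w (m + s) * star (w m)
        = (1 / (d : ℂ)) * (1 / (d : ℂ)) *
          ∑ k : ZMod d, ∑ p : ZMod d,
            (a k * star (a p) * ψ (k * s)) * ψ ((k - p) * m) := by
      intro m
      rw [hw' (m + s), hw' m, star_mul', star_sum]
      have hstar : ∀ p : ZMod d, star (a p * ψ (p * m)) = star (a p) * ψ (-(p * m)) := by
        intro p
        rw [star_mul', hψdef, star_stdAddChar]
      rw [Finset.sum_congr rfl fun p _ => hstar p]
      have hconj : star ((1 : ℂ) / (d : ℂ)) = 1 / (d : ℂ) := by simp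
      rw [hconj, mul_mul_mul_comm, Finset.sum_mul_sum]
      congr 1
      refine Finset.sum_congr rfl fun k _ => ?_
      refine Finset.sum_congr rfl fun p _ => ?_
      have hsplit : ψ (k * (m + s)) * ψ (-(p * m)) = ψ (k * s) * ψ ((k - p) * m) := by
        rw [← AddChar.map_add_eq_mul, ← AddChar.map_add_eq_mul]
        congr 1
        ring
      calc a k * ψ (k * (m + s)) * (star (a p) * ψ (-(p * m)))
          = (a k * star (a p)) * (ψ (k * (m + s)) * ψ (-(p * m))) := by ring
        _ = (a k * star (a p)) * (ψ (k * s) * ψ ((k - p) * m)) := by rw [hsplit]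
        _ = (a k * star (a p) * ψ (k * s)) * ψ ((k - p) * m) := by ring
    rw [Finset.sum_congr rfl fun m _ => term m]
    rw [← Finset.mul_sum, Finset.sum_comm]
    have inner1 : ∀ k : ZMod d,
        (∑ m : ZMod d, ∑ p : ZMod d, (a k * star (a p) * ψ (k * s)) * ψ ((k - p) * m))
          = (a k * star (a k) * ψ (k * s)) * (d : ℂ) := by
      intro k
      rw [Finset.sum_comm]
      have inner2 : ∀ p : ZMod d,
          (∑ m : ZMod d, (a k * star (a p) * ψ (k * s)) * ψ ((k - p) * m))
            = (a k * star (a p) * ψ (k * s)) * (if k - p = 0 then (d : ℂ) else 0) := by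
        intro p
        rw [← Finset.mul_sum, sum_stdAddChar_mul]
      rw [Finset.sum_congr rfl fun p _ => inner2 p]
      have inner3 : ∀ p : ZMod d,
          (a k * star (a p) * ψ (k * s)) * (if k - p = 0 then (d : ℂ) else 0)
            = if p = k then (a k * star (a p) * ψ (k * s)) * (d : ℂ) else 0 := by
        intro p
        by_cases hp : p = k
        · simp [hp]
        · rw [if_neg hp, if_neg (sub_ne_zero.mpr (Ne.symm hp)), mul_zero]
      rw [Finset.sum_congr rfl fun p _ => inner3 p, Finset.sum_ite_eq' Finset.univ k]
      simp
    rw [Finset.sum_congr rfl fun k _ => inner1 k]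
    have hsimp : ∀ k : ZMod d, (a k * star (a k) * ψ (k * s)) * (d : ℂ) = ψ (s * k) * (d : ℂ) := by
      intro k
      rw [hunit k, one_mul, mul_comm k s]
    rw [Finset.sum_congr rfl fun k _ => hsimp k, ← Finset.sum_mul, sum_stdAddChar_mul]
    by_cases hs : s = 0
    · rw [if_pos hs, if_pos hs]
      field_simp
    · simp [hs]
  -- main computation
  rw [Matrix.mem_unitaryGroup_iff]
  ext v u
  rw [Matrix.mul_apply, Matrix.one_apply]
  set c : ℕ := n / d with hc
  set L : ZMod n := (l : ZMod n) with hL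
  have hEntry : ∀ (y x : ZMod n),
      (∑ j : ZMod d, w j • rightAddMatrix (((j.val * c : ℕ) : ZMod n) + L)) y x
        = ∑ j : ZMod d, w j * (if x = y - (((j.val * c : ℕ) : ZMod n) + L) then 1 else 0) := by
    intro y x
    rw [Matrix.sum_apply]
    refine Finset.sum_congr rfl fun j _ => ?_
    rw [Matrix.smul_apply, smul_eq_mul]
    congr 1
    show (if y = x + (((j.val * c : ℕ) : ZMod n) + L) then (1 : ℂ) else 0) = _
    exact if_congr (by rw [eq_sub_iff_add_eq]; exact eq_comm) rfl rfl
  have hStar : ∀ x : ZMod n,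
      star (∑ m : ZMod d, w m * (if x = u - (((m.val * c : ℕ) : ZMod n) + L) then (1:ℂ) else 0))
        = ∑ m : ZMod d, star (w m) * (if x = u - (((m.val * c : ℕ) : ZMod n) + L) then 1 else 0) := by
    intro x
    rw [star_sum]
    refine Finset.sum_congr rfl fun m _ => ?_
    split <;> simp
  simp only [Matrix.star_apply]
  simp only [hEntry]
  simp only [hStar]
  -- expand the product of sums
  have step1 : ∀ x : ZMod n,
      (∑ j : ZMod d, w j * (if x = v - (((j.val * c : ℕ) : ZMod n) + L) then (1:ℂ) else 0)) *
      (∑ m : ZMod d, star (w m) * (if x = u - (((m.val * c : ℕ) : ZMod n) + L) then 1 else 0))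
        = ∑ j : ZMod d, ∑ m : ZMod d, (w j * star (w m)) *
            ((if x = v - (((j.val * c : ℕ) : ZMod n) + L) then (1:ℂ) else 0) *
             (if x = u - (((m.val * c : ℕ) : ZMod n) + L) then 1 else 0)) := by
    intro x
    rw [Finset.sum_mul_sum]
    refine Finset.sum_congr rfl fun j _ => Finset.sum_congr rfl fun m _ => by ring
  simp only [step1]
  rw [Finset.sum_comm]
  have step2 : ∀ j : ZMod d,
      (∑ x : ZMod n, ∑ m : ZMod d, (w j * star (w m)) *
            ((if x = v - (((j.val * c : ℕ) : ZMod n) + L) then (1:ℂ) else 0) *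
             (if x = u - (((m.val * c : ℕ) : ZMod n) + L) then 1 else 0)))
        = ∑ m : ZMod d, (w j * star (w m)) *
            (if v - (((j.val * c : ℕ) : ZMod n) + L) = u - (((m.val * c : ℕ) : ZMod n) + L)
              then (1:ℂ) else 0) := by
    intro j
    rw [Finset.sum_comm]
    refine Finset.sum_congr rfl fun m _ => ?_
    rw [← Finset.mul_sum]
    congr 1
    simp [ite_mul, Finset.sum_ite_eq', eq_comm]
  simp only [step2]
  -- reindex j = m + s
  rw [Finset.sum_comm]
  have step3 : ∀ m : ZMod d,
      (∑ j : ZMod d, (w j * star (w m)) *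
            (if v - (((j.val * c : ℕ) : ZMod n) + L) = u - (((m.val * c : ℕ) : ZMod n) + L)
              then (1:ℂ) else 0))
        = ∑ s : ZMod d, (w (m + s) * star (w m)) *
            (if v = u + ((s.val * c : ℕ) : ZMod n) then (1:ℂ) else 0) := by
    intro m
    rw [← Equiv.sum_comp (Equiv.addLeft m) (fun j => (w j * star (w m)) *
            (if v - (((j.val * c : ℕ) : ZMod n) + L) = u - (((m.val * c : ℕ) : ZMod n) + L)
              then (1:ℂ) else 0))]
    refine Finset.sum_congr rfl fun s _ => ?_
    simp only [Equiv.coe_addLeft]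
    congr 1
    refine if_congr ?_ rfl rfl
    rw [fadd hdvd m s]
    constructor
    · intro h
      linear_combination h
    · intro h
      linear_combination h
  simp only [step3]
  rw [Finset.sum_comm]
  have step4 : ∀ s : ZMod d,
      (∑ m : ZMod d, (w (m + s) * star (w m)) *
            (if v = u + ((s.val * c : ℕ) : ZMod n) then (1:ℂ) else 0))
        = (if s = 0 then (1:ℂ) else 0) * (if v = u + ((s.val * c : ℕ) : ZMod n) then (1:ℂ) else 0) := by
    intro s
    rw [← Finset.sum_mul, key s]
  simp only [step4]
  have step5 : ∀ s : ZMod d,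
      (if s = 0 then (1:ℂ) else 0) * (if v = u + ((s.val * c : ℕ) : ZMod n) then (1:ℂ) else 0)
        = if s = 0 then (if v = u + ((s.val * c : ℕ) : ZMod n) then (1:ℂ) else 0) else 0 := by
    intro s
    split <;> simp
  simp only [step5]
  rw [Finset.sum_ite_eq' Finset.univ (0 : ZMod d)]
  simp [ZMod.val_zero]
end

section
/- Let a, b, c, d ∈ ℂ, all nonzero, satisfy conj(c)·a + conj(b)·d = 0, conj(a)·b + conj(d)·c = 0, conj(a)·d + conj(d)·a + conj(b)·c + conj(c)·b = 0, and |a|² + |b|² + |c|² + |d|² = 1. Then there exist real numbers θ, φ and a sign ε ∈ {+1, −1} such that a = e^{iθ} e^{iφ}/2, b = e^{iθ}/2, c = ε e^{iθ}/2, and d = −ε e^{iθ} e^{iφ}/2. -/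
/-!
After conjugating the first equation, the rows `(c, b)` and `(b, c)` both annihilate the
vector `(ā, d̄) ≠ 0`, so `c² = b²`, i.e. `c = ε b` with `ε = ±1`; the first equation then forces `d = -ε a`.
With this, the third equation reads `2ε(|b|² - |a|²) = 0` and the normalisation gives
`|a| = |b| = 1/2`; the global phase is `arg b` and the relative phase `arg a - arg b`.
-/

open Complex ComplexConjugate

theorem eq_or_eq_neg_of_mul_add_mul_eq_zero {R : Type*} [CommRing R] [NoZeroDivisors R]
    {x y a d : R} (ha : a ≠ 0) (h₁ : x * a + y * d = 0) (h₂ : y * a + x * d = 0) :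
    x = y ∨ x = -y := by
  rw [← sq_eq_sq_iff_eq_or_eq_neg]
  have h : (x ^ 2 - y ^ 2) * a = 0 := by linear_combination x * h₁ - y * h₂
  exact sub_eq_zero.mp ((mul_eq_zero.mp h).resolve_right ha)

namespace Complex

theorem eq_exp_arg_mul_I_div_two {z : ℂ} (hz : ‖z‖ = 1 / 2) : z = exp (arg z * I) / 2 := by
  conv_lhs => rw [← norm_mul_exp_arg_mul_I z, hz]
  push_cast
  ring

theorem exists_eq_exp_mul_exp_div_two {a b : ℂ} (ha : ‖a‖ = 1 / 2) (hb : ‖b‖ = 1 / 2) :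
    ∃ θ φ : ℝ, a = exp (θ * I) * exp (φ * I) / 2 ∧ b = exp (θ * I) / 2 := by
  refine ⟨arg b, arg a - arg b, ?_, eq_exp_arg_mul_I_div_two hb⟩
  calc a = exp (arg a * I) / 2 := eq_exp_arg_mul_I_div_two ha
    _ = _ := by rw [← exp_add]; push_cast; ring_nf

theorem norm_eq_norm_of_conj_mul_add_eq_zero {a b : ℂ} {ε : ℝ} (hε : ε ≠ 0)
    (h : conj a * (-ε * a) + conj (-ε * a) * a + conj b * (ε * b) + conj (ε * b) * b = 0) :
    ‖a‖ = ‖b‖ := by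
  simp only [map_mul, map_neg, conj_ofReal] at h
  have h' : ((2 * ε * (‖b‖ ^ 2 - ‖a‖ ^ 2) : ℝ) : ℂ) = 0 := by
    push_cast
    linear_combination h + 2 * ε * conj_mul' a - 2 * ε * conj_mul' b
  have hsq : ‖a‖ ^ 2 = ‖b‖ ^ 2 :=
    (sub_eq_zero.mp ((mul_eq_zero.mp (ofReal_eq_zero.mp h')).resolve_left
      (mul_ne_zero two_ne_zero hε))).symm
  exact (pow_left_inj₀ (norm_nonneg a) (norm_nonneg b) two_ne_zero).mp hsq

end Complex

theorem johnson_J42_coefficients_classification_general (a b c d : ℂ)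
    (ha : a ≠ 0) (hb : b ≠ 0)
    (h1 : (starRingEnd ℂ) c * a + (starRingEnd ℂ) b * d = 0)
    (h2 : (starRingEnd ℂ) a * b + (starRingEnd ℂ) d * c = 0)
    (h3 : (starRingEnd ℂ) a * d + (starRingEnd ℂ) d * a
        + (starRingEnd ℂ) b * c + (starRingEnd ℂ) c * b = 0)
    (h4 : ‖a‖ ^ 2 + ‖b‖ ^ 2
        + ‖c‖ ^ 2 + ‖d‖ ^ 2 = 1) :
    ∃ θ φ ε : ℝ, (ε = 1 ∨ ε = -1) ∧
      a = Complex.exp (θ * Complex.I) * Complex.exp (φ * Complex.I) / 2 ∧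
      b = Complex.exp (θ * Complex.I) / 2 ∧
      c = (ε : ℂ) * Complex.exp (θ * Complex.I) / 2 ∧
      d = -(ε : ℂ) * Complex.exp (θ * Complex.I) * Complex.exp (φ * Complex.I) / 2 := by
  have h1' : c * conj a + b * conj d = 0 := by simpa [mul_comm] using congrArg conj h1
  have h2' : b * conj a + c * conj d = 0 := by linear_combination h2
  obtain ⟨ε, hε, rfl⟩ : ∃ ε : ℝ, (ε = 1 ∨ ε = -1) ∧ c = ε * b := by
    rcases eq_or_eq_neg_of_mul_add_mul_eq_zero (by simpa using ha) h1' h2' with rfl | rfl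
    exacts [⟨1, .inl rfl, by simp⟩, ⟨-1, .inr rfl, by simp⟩]
  have hε0 : ε ≠ 0 := by rcases hε with rfl | rfl <;> norm_num
  obtain rfl : d = -ε * a := by
    refine mul_left_cancel₀ (by simpa using hb : conj b ≠ 0) ?_
    simp only [map_mul, conj_ofReal] at h1
    linear_combination h1
  have hab := norm_eq_norm_of_conj_mul_add_eq_zero hε0 h3
  have hεn : ‖(ε : ℂ)‖ = 1 := by rcases hε with rfl | rfl <;> simp
  have ha2 : ‖a‖ = 1 / 2 := by
    simp only [norm_mul, norm_neg, hεn, one_mul, ← hab] at h4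
    nlinarith [norm_nonneg a]
  obtain ⟨θ, φ, rfl, rfl⟩ := exists_eq_exp_mul_exp_div_two ha2 (hab ▸ ha2)
  exact ⟨θ, φ, ε, hε, rfl, rfl, by ring, by ring⟩

/-- Every solution with all coefficients nonzero of the unitarity conditions for the
generating set `(1, 5, 2, 4)` of `ℤ/6ℤ` (whose Cayley graph is the Johnson graph
`J(4,2)`) is, up to a global phase `e^{iθ}`, of the form `a = e^{iθ} e^{iφ}/2`,
`b = e^{iθ}/2`, `c = ε e^{iθ}/2`, `d = −ε e^{iθ} e^{iφ}/2` with `ε ∈ {+1, −1}`. -/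
theorem johnson_J42_coefficients_classification (a b c d : ℂ)
    (ha : a ≠ 0) (hb : b ≠ 0) (hc : c ≠ 0) (hd : d ≠ 0)
    (h1 : (starRingEnd ℂ) c * a + (starRingEnd ℂ) b * d = 0)
    (h2 : (starRingEnd ℂ) a * b + (starRingEnd ℂ) d * c = 0)
    (h3 : (starRingEnd ℂ) a * d + (starRingEnd ℂ) d * a
        + (starRingEnd ℂ) b * c + (starRingEnd ℂ) c * b = 0)
    (h4 : ‖a‖ ^ 2 + ‖b‖ ^ 2
        + ‖c‖ ^ 2 + ‖d‖ ^ 2 = 1) :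
    ∃ θ φ ε : ℝ, (ε = 1 ∨ ε = -1) ∧
      a = Complex.exp (θ * Complex.I) * Complex.exp (φ * Complex.I) / 2 ∧
      b = Complex.exp (θ * Complex.I) / 2 ∧
      c = (ε : ℂ) * Complex.exp (θ * Complex.I) / 2 ∧
      d = -(ε : ℂ) * Complex.exp (θ * Complex.I) * Complex.exp (φ * Complex.I) / 2 :=
  johnson_J42_coefficients_classification_general a b c d ha hb h1 h2 h3 h4
end

section
/- Let n ≥ 4 and 1 ≤ k ≤ n−1, and let J(n,k) be the Johnson graph. Then J(n,k) satisfies the quadrangularity condition: for every pair of distinct vertices A, B that have a common neighbor C, there exists a vertex C' ≠ C that is also adjacent to both A and B. -/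
/-- Adjacency in the Johnson graph `J(n,k)`: two `k`-element subsets of an
`n`-element set are adjacent when they are distinct and share `k−1` elements. -/
def johnsonAdj (n k : ℕ) (A B : Finset (Fin n)) : Prop :=
  A ≠ B ∧ (A ∩ B).card = k - 1

lemma sdiff_L1 {α : Type*} [DecidableEq α] {C : Finset α} {a t x y : α} (haC : a ∉ C)
    (htC : t ∉ C) (hyC : y ∈ C) (hyx : y ≠ x) :
    (insert a (C.erase x)) \ (insert a (insert t ((C.erase x).erase y))) = {y} := by
  ext u
  simp only [Finset.mem_sdiff, Finset.mem_insert, Finset.mem_erase, Finset.mem_singleton]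
  by_cases h1 : u = a <;> by_cases h2 : u = t <;> by_cases h3 : u = x <;>
    by_cases h4 : u = y <;> by_cases h5 : u ∈ C <;> simp_all

lemma sdiff_L2 {α : Type*} [DecidableEq α] {C : Finset α} {a s x : α} (haC : a ∉ C)
    (hsC : s ∈ C) (hsx : s ≠ x) :
    (insert a (C.erase x)) \ (insert a (C.erase s)) = {s} := by
  ext u
  simp only [Finset.mem_sdiff, Finset.mem_insert, Finset.mem_erase, Finset.mem_singleton]
  by_cases h1 : u = a <;> by_cases h2 : u = s <;> by_cases h3 : u = x <;>
    by_cases h5 : u ∈ C <;> simp_all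

lemma adj_of {n k : ℕ} {A C' : Finset (Fin n)} (hA : A.card = k) (hk : 1 ≤ k)
    (u : Fin n) (h : A \ C' = {u}) : johnsonAdj n k A C' := by
  have hu : u ∈ A \ C' := by rw [h]; simp
  rw [Finset.mem_sdiff] at hu
  refine ⟨fun e => hu.2 (e ▸ hu.1), ?_⟩
  have h1 : (A \ C').card = 1 := by rw [h]; simp
  have h2 : (A \ C').card + (A ∩ C').card = A.card := Finset.card_sdiff_add_card_inter A C'
  omega

lemma decomp {n k : ℕ} {A C : Finset (Fin n)} (hA : A.card = k) (hC : C.card = k)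
    (hk : 1 ≤ k) (hadj : johnsonAdj n k A C) :
    ∃ a x, a ∉ C ∧ x ∈ C ∧ x ∉ A ∧ a ∈ A ∧ A = insert a (C.erase x) := by
  have h1 : (A \ C).card + (A ∩ C).card = A.card := Finset.card_sdiff_add_card_inter A C
  have h2 : (C \ A).card + (C ∩ A).card = C.card := Finset.card_sdiff_add_card_inter C A
  rw [Finset.inter_comm] at h2
  have hAC := hadj.2
  have hd1 : (A \ C).card = 1 := by omega
  have hd2 : (C \ A).card = 1 := by omega
  obtain ⟨a, ha⟩ := Finset.card_eq_one.mp hd1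
  obtain ⟨x, hx⟩ := Finset.card_eq_one.mp hd2
  have ha' : a ∈ A ∧ a ∉ C := by
    have : a ∈ A \ C := by rw [ha]; simp
    simpa using this
  have hx' : x ∈ C ∧ x ∉ A := by
    have : x ∈ C \ A := by rw [hx]; simp
    simpa using this
  refine ⟨a, x, ha'.2, hx'.1, hx'.2, ha'.1, ?_⟩
  ext t
  have e1 := Finset.ext_iff.mp ha t
  have e2 := Finset.ext_iff.mp hx t
  simp only [Finset.mem_sdiff, Finset.mem_singleton] at e1 e2
  simp only [Finset.mem_insert, Finset.mem_erase]
  by_cases h : t ∈ C <;> by_cases h' : t ∈ A <;> simp_all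

/-- The Johnson graph `J(n,k)` (`n ≥ 4`, `1 ≤ k ≤ n−1`) satisfies the quadrangularity
condition: any two distinct vertices with a common neighbor `C` have another common
neighbor `C' ≠ C`. -/
theorem johnson_quadrangularity (n k : ℕ) (hn : 4 ≤ n) (hk1 : 1 ≤ k) (hk2 : k ≤ n - 1) :
    ∀ A B C : Finset (Fin n), A.card = k → B.card = k → C.card = k →
      A ≠ B → johnsonAdj n k A C → johnsonAdj n k B C →
      ∃ C' : Finset (Fin n), C'.card = k ∧ C' ≠ C ∧
        johnsonAdj n k A C' ∧ johnsonAdj n k B C' := by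
  intro A B C hA hB hC hAB hAC hBC
  obtain ⟨a, x, haC, hxC, hxA, haA, hAeq⟩ := decomp hA hC hk1 hAC
  obtain ⟨b, y, hbC, hyC, hyB, hbB, hBeq⟩ := decomp hB hC hk1 hBC
  have hCx : (C.erase x).card = k - 1 := by rw [Finset.card_erase_of_mem hxC, hC]
  have huniv : (Finset.univ : Finset (Fin n)).card = n := by simp
  by_cases hxy : x = y
  · subst hxy
    have hab : a ≠ b := fun e => hAB (by rw [hAeq, hBeq, e])
    by_cases hk : k = 1
    · -- k = 1 : A = {a}, B = {b}, C = {x}, pick a fresh element t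
      have hCe : C.erase x = ∅ := Finset.card_eq_zero.mp (by omega)
      have hAe : A = {a} := by rw [hAeq, hCe]; rfl
      have hBe : B = {b} := by rw [hBeq, hCe]; rfl
      have hs3 : (insert a (insert b ({x} : Finset (Fin n)))).card ≤ 3 := by
        refine le_trans (Finset.card_insert_le _ _) ?_
        have := Finset.card_insert_le b ({x} : Finset (Fin n))
        simp at this ⊢; omega
      have hne : (insert a (insert b ({x} : Finset (Fin n)))) ≠ Finset.univ := by
        intro e; rw [e, huniv] at hs3; omega
      obtain ⟨t, -, ht⟩ := Finset.exists_of_ssubset (Finset.ssubset_univ_iff.mpr hne)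
      simp only [Finset.mem_insert, Finset.mem_singleton, not_or] at ht
      obtain ⟨hta, htb, htx⟩ := ht
      refine ⟨{t}, by simp [hk], ?_, ?_, ?_⟩
      · intro e
        have : x ∈ ({t} : Finset (Fin n)) := e ▸ hxC
        simp at this; exact htx this.symm
      · exact adj_of hA hk1 a (by rw [hAe]; ext u; simp; rintro rfl; exact fun e => hta e.symm)
      · exact adj_of hB hk1 b (by rw [hBe]; ext u; simp; rintro rfl; exact fun e => htb e.symm)
    · -- k ≥ 2 : C' = {a,b} ∪ (C \ {x,s})
      have hk2' : 2 ≤ k := by omega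
      obtain ⟨s, hs⟩ := Finset.card_pos.mp (show 0 < (C.erase x).card by omega)
      rw [Finset.mem_erase] at hs
      obtain ⟨hsx, hsC⟩ := hs
      refine ⟨insert a (insert b ((C.erase x).erase s)), ?_, ?_, ?_, ?_⟩
      · rw [Finset.card_insert_of_notMem (by simp [haC, hab]),
          Finset.card_insert_of_notMem (by simp [hbC]),
          Finset.card_erase_of_mem (by simp [hsx, hsC]), hCx]
        omega
      · intro e
        exact haC (e ▸ Finset.mem_insert_self a _)
      · refine adj_of hA hk1 s ?_
        rw [hAeq]; ext t
        simp only [Finset.mem_sdiff, Finset.mem_insert, Finset.mem_erase, Finset.mem_singleton,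
          not_or, not_and]
        constructor
        · rintro ⟨h1, h2, h3, h4⟩
          rcases h1 with rfl | ⟨h5, h6⟩
          · exact absurd rfl h2
          · by_contra hts; exact (h4 hts) h5 h6
        · rintro rfl
          exact ⟨Or.inr ⟨hsx, hsC⟩, fun e => haC (e ▸ hsC), fun e => hbC (e ▸ hsC),
            fun e => absurd rfl e⟩
      · refine adj_of hB hk1 s ?_
        rw [hBeq]; ext t
        simp only [Finset.mem_sdiff, Finset.mem_insert, Finset.mem_erase, Finset.mem_singleton,
          not_or, not_and]
        constructor
        · rintro ⟨h1, h2, h3, h4⟩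
          rcases h1 with rfl | ⟨h5, h6⟩
          · exact absurd rfl h3
          · by_contra hts; exact (h4 hts) h5 h6
        · rintro rfl
          exact ⟨Or.inr ⟨hsx, hsC⟩, fun e => haC (e ▸ hsC), fun e => hbC (e ▸ hsC),
            fun e => absurd rfl e⟩
  · -- x ≠ y
    have hyx : y ≠ x := fun e => hxy e.symm
    have hk2' : 2 ≤ k := by
      have hsub : ({x, y} : Finset (Fin n)) ⊆ C := by
        intro u hu; simp at hu; rcases hu with rfl | rfl <;> assumption
      have := Finset.card_le_card hsub
      rw [Finset.card_insert_of_notMem (by simp [hxy]), Finset.card_singleton, hC] at this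
      omega
    have hyCx : y ∈ C.erase x := Finset.mem_erase.mpr ⟨hyx, hyC⟩
    by_cases hab : a = b
    · subst hab
      by_cases hnk : k + 2 ≤ n
      · -- pick t outside A ∪ B ∪ C = insert a C
        have hcardIns : (insert a C).card = k + 1 := by
          rw [Finset.card_insert_of_notMem haC, hC]
        have hne : insert a C ≠ Finset.univ := by
          intro e; rw [e, huniv] at hcardIns; omega
        obtain ⟨t, -, ht⟩ := Finset.exists_of_ssubset (Finset.ssubset_univ_iff.mpr hne)
        simp only [Finset.mem_insert, not_or] at ht
        obtain ⟨hta, htC⟩ := ht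
        have htm : t ∉ (C.erase x).erase y :=
          fun h => htC (Finset.mem_of_mem_erase (Finset.mem_of_mem_erase h))
        have ham : a ∉ insert t ((C.erase x).erase y) := by
          simp only [Finset.mem_insert]
          rintro (rfl | h)
          · exact hta rfl
          · exact haC (Finset.mem_of_mem_erase (Finset.mem_of_mem_erase h))
        refine ⟨insert a (insert t ((C.erase x).erase y)), ?_, ?_, ?_, ?_⟩
        · rw [Finset.card_insert_of_notMem ham, Finset.card_insert_of_notMem htm,
            Finset.card_erase_of_mem hyCx, hCx]
          omega
        · intro e; exact haC (e ▸ Finset.mem_insert_self a _)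
        · refine adj_of hA hk1 y ?_
          rw [hAeq]; exact sdiff_L1 haC htC hyC hyx
        · refine adj_of hB hk1 x ?_
          rw [hBeq, Finset.erase_right_comm]
          exact sdiff_L1 haC htC hxC hxy
      · -- n = k + 1, so k ≥ 3
        have hk3 : 3 ≤ k := by omega
        have hcc : 0 < ((C.erase x).erase y).card := by
          rw [Finset.card_erase_of_mem hyCx, hCx]; omega
        obtain ⟨s, hs⟩ := Finset.card_pos.mp hcc
        simp only [Finset.mem_erase] at hs
        obtain ⟨hsy, hsx, hsC⟩ := hs
        refine ⟨insert a (C.erase s), ?_, ?_, ?_, ?_⟩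
        · have ham : a ∉ C.erase s := fun h => haC (Finset.mem_of_mem_erase h)
          rw [Finset.card_insert_of_notMem ham, Finset.card_erase_of_mem hsC, hC]
          omega
        · intro e; exact haC (e ▸ Finset.mem_insert_self a _)
        · refine adj_of hA hk1 s ?_
          rw [hAeq]; exact sdiff_L2 haC hsC hsx
        · refine adj_of hB hk1 s ?_
          rw [hBeq]; exact sdiff_L2 haC hsC hsy
    · -- a ≠ b
      refine ⟨insert a (insert b ((C.erase x).erase y)), ?_, ?_, ?_, ?_⟩
      · have hbm : b ∉ (C.erase x).erase y :=
          fun h => hbC (Finset.mem_of_mem_erase (Finset.mem_of_mem_erase h))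
        have ham : a ∉ insert b ((C.erase x).erase y) := by
          simp only [Finset.mem_insert]
          rintro (rfl | h)
          · exact hab rfl
          · exact haC (Finset.mem_of_mem_erase (Finset.mem_of_mem_erase h))
        rw [Finset.card_insert_of_notMem ham, Finset.card_insert_of_notMem hbm,
          Finset.card_erase_of_mem hyCx, hCx]
        omega
      · intro e; exact haC (e ▸ Finset.mem_insert_self a _)
      · refine adj_of hA hk1 y ?_
        rw [hAeq]; exact sdiff_L1 haC hbC hyC hyx
      · refine adj_of hB hk1 x ?_
        rw [hBeq, Finset.insert_comm, Finset.erase_right_comm]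
        exact sdiff_L1 hbC haC hxC hxy
end
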